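/- For every integer k ≥ 1, the number of brick-wall lattice paths of the first type in the rectangle R = {0,…,2k} × {0,1,2,3} (width w = 4, odd length l = 2k+1) equals 4·3^k, i.e. B^{(1)}_{2k+1,4} = 4·3^k. -/

import Mathlib

/-- A step of a brick-wall lattice path. `t = true` corresponds to paths of the
first type (up-steps from even points, down-steps from odd points), `t = false`
to paths of the second type (up-steps from odd points, down-steps from even
points). Vertical steps are forbidden from points with first coordinate `0`. -/
def BrickStep (t : Bool) (p q : ℤ × ℤ) : Prop :=
  q = (p.1 + 1, p.2) ∨
  (q = (p.1, p.2 + 1) ∧ p.1 ≠ 0 ∧ (if t then Even (p.1 + p.2) else Odd (p.1 + p.2))) ∨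
  (q = (p.1, p.2 - 1) ∧ p.1 ≠ 0 ∧ (if t then Odd (p.1 + p.2) else Even (p.1 + p.2)))

/-- The set of brick-wall lattice paths (of the first type if `t = true`, of the
second type if `t = false`) in the rectangle `{0,…,l−1} × {0,…,w−1}`: nonempty
lists of pairwise distinct points of the rectangle, starting on the left side,
ending on the right side, whose consecutive differences are admissible steps. -/
def brickPaths (t : Bool) (l w : ℤ) : Set (List (ℤ × ℤ)) :=
  {v | v ≠ [] ∧ v.Nodup ∧
    (∀ p ∈ v, 0 ≤ p.1 ∧ p.1 ≤ l - 1 ∧ 0 ≤ p.2 ∧ p.2 ≤ w - 1) ∧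
    (∀ p ∈ v.head?, p.1 = 0) ∧
    (∀ p ∈ v.getLast?, p.1 = l - 1) ∧
    List.Chain' (BrickStep t) v}

/-!
Inside a column `a ≠ 0` the cells pair up into bricks `{b, brickPartner t a b}`, and a vertical
step only moves to the other cell of its brick, so a second vertical step would have to go back.
Hence a path crosses each column `a ≥ 1` either straight or with one vertical step inside a brick,
and the number of paths ending in row `β` of column `a` is the sum of the numbers ending in rows
`β` and `brickPartner t a β` of column `a - 1`. In width four an odd column pairs the rows `{1, 2}`
and an even one `{0, 1}`, `{2, 3}`, so two consecutive columns turn the row counts `(c, c, c, c)`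
into `(c, 2c, 2c, c)` and then `(3c, 3c, 3c, 3c)`, starting from `(1, 1, 1, 1)` in column `0`.
-/

def brickPartner (t : Bool) (a b : ℤ) : ℤ :=
  if (if t then Even (a + b) else Odd (a + b)) then b + 1 else b - 1

lemma brickPartner_brickPartner (t : Bool) (a b : ℤ) :
    brickPartner t a (brickPartner t a b) = b := by
  cases t <;> simp only [brickPartner, Bool.false_eq_true, if_true, if_false, Int.even_iff,
    Int.odd_iff] <;> split_ifs <;> omega

lemma brickPartner_ne (t : Bool) (a b : ℤ) : brickPartner t a b ≠ b := by
  unfold brickPartner; split_ifs <;> omega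

lemma brickStep_iff {t : Bool} {p q : ℤ × ℤ} :
    BrickStep t p q ↔
      p = (q.1 - 1, q.2) ∨ (p.1 = q.1 ∧ q.1 ≠ 0 ∧ p.2 = brickPartner t q.1 q.2) := by
  obtain ⟨a, b⟩ := p
  obtain ⟨c, d⟩ := q
  cases t <;> simp only [BrickStep, brickPartner, Prod.ext_iff, Bool.false_eq_true, if_true,
    if_false, Int.even_iff, Int.odd_iff] <;> split_ifs <;> omega

lemma BrickStep.fst_le {t : Bool} {p q : ℤ × ℤ} (h : BrickStep t p q) : p.1 ≤ q.1 := by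
  rcases brickStep_iff.1 h with rfl | ⟨h, -⟩ <;> simp only [h] <;> omega

section BrickPathsTo

variable {t : Bool} {l w β γ : ℤ} {u v : List (ℤ × ℤ)}

def brickPathsTo (t : Bool) (l w β : ℤ) : Set (List (ℤ × ℤ)) :=
  {v | v ∈ brickPaths t l w ∧ v.getLast? = some (l - 1, β)}

lemma fst_le_of_isChain_brickStep (hv : v.IsChain (BrickStep t)) {p : ℤ × ℤ}
    (hp : v.getLast? = some p) : ∀ q ∈ v, q.1 ≤ p.1 := by
  refine hv.backwards_induction (fun q => q.1 ≤ p.1) v (fun x y hxy hy => hxy.fst_le.trans hy)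
    (fun hne => ?_)
  rw [List.getLast?_eq_some_getLast hne, Option.some_inj] at hp
  rw [hp]

lemma notMem_of_mem_brickPathsTo (hu : u ∈ brickPathsTo t l w γ) (δ : ℤ) : (l, δ) ∉ u :=
  fun h => by simpa using (hu.1.2.2.1 _ h).2.1

lemma mem_brickPathsTo_of_append {s : List (ℤ × ℤ)} {a : ℤ} (h : u ++ s ∈ brickPathsTo t l w β)
    (hu : u.getLast? = some (a, γ)) : u ∈ brickPathsTo t (a + 1) w γ := by
  obtain ⟨⟨-, hnd, hbd, hhd, -, hch⟩, -⟩ := h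
  have hne : u ≠ [] := by rintro rfl; simp at hu
  have hchu : u.IsChain (BrickStep t) := (List.isChain_append.1 hch).1
  refine ⟨⟨hne, hnd.of_append_left, fun p hp => ?_, ?_, by simp [hu], hchu⟩, by simp [hu]⟩
  · have := hbd p (List.mem_append_left s hp)
    have := fst_le_of_isChain_brickStep hchu hu p hp
    omega
  · rwa [List.head?_append_of_ne_nil _ hne] at hhd

lemma append_mem_brickPathsTo {a : ℤ} (hu : u ∈ brickPathsTo t l w γ)
    (hstep : BrickStep t (l - 1, γ) (a, β)) (hβ₀ : 0 ≤ β) (hβ : β < w) (hnotMem : (a, β) ∉ u) :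
    u ++ [(a, β)] ∈ brickPathsTo t (a + 1) w β := by
  obtain ⟨⟨hne, hnd, hbd, hhd, -, hch⟩, hlast⟩ := hu
  have hla : l - 1 ≤ a := hstep.fst_le
  refine ⟨⟨by simp, List.nodup_append.2 ⟨hnd, by simp, ?_⟩, ?_, ?_, by simp,
    List.isChain_append.2 ⟨hch, by simp, by simpa [hlast] using hstep⟩⟩, by simp⟩
  · rintro p hp _ hq rfl
    rw [List.mem_singleton.1 hq] at hp
    exact hnotMem hp
  · intro p hp
    rcases List.mem_append.1 hp with hp | hp
    · have := hbd p hp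
      omega
    · have := (hbd _ (List.mem_of_getLast? hlast)).1
      rw [List.mem_singleton.1 hp]
      dsimp only at this ⊢
      omega
  · rwa [List.head?_append_of_ne_nil _ hne]

lemma exists_append_of_mem_brickPathsTo {a : ℤ} (hv : v ∈ brickPathsTo t (a + 1) w β)
    (ha : a ≠ 0) : ∃ u p, v = u ++ [(a, β)] ∧ BrickStep t p (a, β) ∧
      u ∈ brickPathsTo t (p.1 + 1) w p.2 := by
  have hlast : v.getLast? = some (a, β) := by simpa using hv.2
  have hv' : v.dropLast ++ [(a, β)] = v := List.dropLast_append_getLast? _ (by simp [hlast])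
  rw [← hv'] at hv ⊢
  set u := v.dropLast
  have hne : u ≠ [] := by
    rintro hu
    simp only [hu, List.nil_append] at hv
    exact ha (hv.1.2.2.2.1 (a, β) rfl)
  obtain ⟨p, hp⟩ := Option.isSome_iff_exists.1 (List.getLast?_isSome.2 hne)
  refine ⟨u, p, rfl, ?_, mem_brickPathsTo_of_append hv hp⟩
  exact (List.isChain_append.1 hv.1.2.2.2.2.2).2.2 p (by simp [hp]) _ rfl

lemma brickPathsTo_succ (hl : l ≠ 0) (hβ₀ : 0 ≤ β) (hβ : β < w) :
    brickPathsTo t (l + 1) w β =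
      (· ++ [(l, β)]) '' brickPathsTo t l w β ∪
      (· ++ [(l, brickPartner t l β), (l, β)]) '' brickPathsTo t l w (brickPartner t l β) := by
  ext v
  constructor
  · intro hv
    obtain ⟨u, p, rfl, hstep, hu⟩ := exists_append_of_mem_brickPathsTo hv hl
    rcases brickStep_iff.1 hstep with rfl | ⟨hp₁, -, hp₂⟩
    · exact Or.inl ⟨u, by simpa using hu, rfl⟩
    obtain rfl : p = (l, brickPartner t l β) := Prod.ext hp₁ hp₂
    obtain ⟨u', q, rfl, hstep', hu'⟩ := exists_append_of_mem_brickPathsTo hu hl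
    rcases brickStep_iff.1 hstep' with rfl | ⟨hq₁, -, hq₂⟩
    · exact Or.inr ⟨u', by simpa using hu', by simp⟩
    -- two vertical steps in a row would return to the start
    rw [brickPartner_brickPartner] at hq₂
    obtain rfl : q = (l, β) := Prod.ext hq₁ hq₂
    have hmem : (l, β) ∈ u' := by simpa using List.mem_of_getLast? hu'.2
    exact ((List.nodup_append.1 hv.1.2.1).2.2 _ (List.mem_append_left _ hmem) _
      (List.mem_singleton_self _) rfl).elim
  · rintro (⟨u, hu, rfl⟩ | ⟨u, hu, rfl⟩)
    · exact append_mem_brickPathsTo hu (brickStep_iff.2 (Or.inl (by simp))) hβ₀ hβ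
        (notMem_of_mem_brickPathsTo hu β)
    · have hpartner := (hu.1.2.2.1 _ (List.mem_of_getLast? hu.2)).2.2
      have hu' := append_mem_brickPathsTo hu (brickStep_iff.2 (Or.inl (by simp))) hpartner.1
        (by omega) (notMem_of_mem_brickPathsTo hu _)
      have hstep : BrickStep t (l + 1 - 1, brickPartner t l β) (l, β) := by
        rw [add_sub_cancel_right]
        exact brickStep_iff.2 (Or.inr ⟨rfl, hl, rfl⟩)
      simpa using append_mem_brickPathsTo hu' hstep hβ₀ hβ <| by
        simpa [notMem_of_mem_brickPathsTo hu β] using (brickPartner_ne t l β).symm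

lemma encard_brickPathsTo_succ (hl : l ≠ 0) (hβ₀ : 0 ≤ β) (hβ : β < w) :
    (brickPathsTo t (l + 1) w β).encard =
      (brickPathsTo t l w β).encard + (brickPathsTo t l w (brickPartner t l β)).encard := by
  rw [brickPathsTo_succ hl hβ₀ hβ, Set.encard_union_eq,
    (List.append_left_injective _).encard_image, (List.append_left_injective _).encard_image]
  refine Set.disjoint_left.2 ?_
  rintro _ ⟨u, hu, rfl⟩ ⟨u', -, h⟩
  have hmem : (l, brickPartner t l β) ∈ u := by
    have h' := congrArg List.dropLast h
    simp only [List.dropLast_concat] at h'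
    rw [← h']
    simp
  exact notMem_of_mem_brickPathsTo hu _ hmem

lemma brickPathsTo_eq_empty (hβ : β < 0 ∨ w ≤ β) : brickPathsTo t l w β = ∅ := by
  refine Set.eq_empty_of_forall_notMem fun v hv => ?_
  have := (hv.1.2.2.1 _ (List.mem_of_getLast? hv.2)).2.2
  omega

lemma brickPathsTo_one (hβ₀ : 0 ≤ β) (hβ : β < w) : brickPathsTo t 1 w β = {[(0, β)]} := by
  ext v
  constructor
  · rintro ⟨⟨hne, -, hbd, hhd, -, hch⟩, hlast⟩
    rcases v with _ | ⟨p, _ | ⟨q, _⟩⟩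
    · exact absurd rfl hne
    · simpa using hlast
    · have hp : p.1 = 0 := hhd p rfl
      have hq := (hbd q (by simp)).2.1
      rcases brickStep_iff.1 (List.isChain_cons_cons.1 hch).1 with rfl | ⟨h, h', -⟩ <;> omega
  · rintro rfl
    exact ⟨⟨by simp, by simp, by simp; omega, by simp, by simp, List.isChain_singleton _⟩,
      by simp⟩

lemma brickPaths_eq_biUnion : brickPaths t l w = ⋃ β ∈ Set.Ico 0 w, brickPathsTo t l w β := by
  ext v
  simp only [Set.mem_iUnion, Set.mem_Ico, exists_prop]
  constructor
  · intro hv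
    obtain ⟨p, hp⟩ := Option.isSome_iff_exists.1 (List.getLast?_isSome.2 hv.1)
    have hbd := hv.2.2.1 p (List.mem_of_getLast? hp)
    refine ⟨p.2, ⟨hbd.2.2.1, by omega⟩, hv, ?_⟩
    rw [hp, ← hv.2.2.2.2.1 p hp]
  · rintro ⟨β, -, hv, -⟩
    exact hv

lemma encard_brickPaths :
    (brickPaths t l w).encard = ∑ β ∈ Finset.Ico 0 w, (brickPathsTo t l w β).encard := by
  rw [brickPaths_eq_biUnion, ← Finset.coe_Ico, (Finset.finite_toSet _).encard_biUnion,
    finsum_mem_coe_finset]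
  exact fun β _ γ _ hβγ => Set.disjoint_left.2 fun v hβ hγ =>
    hβγ (by simpa using hβ.2.symm.trans hγ.2)

lemma encard_brickPathsTo_width_four (k : ℕ) (hβ₀ : 0 ≤ β) (hβ : β < 4) :
    (brickPathsTo true (2 * k + 1) 4 β).encard = 3 ^ k := by
  induction k generalizing β with
  | zero => simp [brickPathsTo_one hβ₀ hβ]
  | succ k ih =>
    have hout : ∀ a : ℤ, (brickPathsTo true a 4 (-1)).encard = 0 ∧
        (brickPathsTo true a 4 4).encard = 0 := fun a =>
      ⟨by simp [brickPathsTo_eq_empty], by simp [brickPathsTo_eq_empty]⟩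
    have hodd : brickPartner true (2 * k + 1) 0 = -1 ∧ brickPartner true (2 * k + 1) 1 = 2 ∧
        brickPartner true (2 * k + 1) 2 = 1 ∧ brickPartner true (2 * k + 1) 3 = 4 := by
      norm_num [brickPartner, parity_simps]
    have heven : brickPartner true (2 * k + 1 + 1) 0 = 1 ∧
        brickPartner true (2 * k + 1 + 1) 1 = 0 ∧ brickPartner true (2 * k + 1 + 1) 2 = 3 ∧
        brickPartner true (2 * k + 1 + 1) 3 = 2 := by
      norm_num [brickPartner, parity_simps]
    have hmid : ∀ b : ℤ, 0 ≤ b → b < 4 → (brickPathsTo true (2 * k + 1 + 1) 4 b).encard =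
        if b = 1 ∨ b = 2 then 2 * 3 ^ k else 3 ^ k := by
      intro b hb₀ hb
      rw [encard_brickPathsTo_succ (by omega) hb₀ hb, ih hb₀ hb]
      interval_cases b <;> simp only [hodd, hout] <;> simp [ih, ← two_mul]
    rw [show (2 * ((k + 1 : ℕ) : ℤ) + 1) = 2 * k + 1 + 1 + 1 by push_cast; ring,
      encard_brickPathsTo_succ (by omega) hβ₀ hβ]
    interval_cases β <;> simp only [heven] <;> simp [hmid] <;> ring

end BrickPathsTo

theorem brickPaths_first_width_four_odd_length_general (k : ℕ) :
    (brickPaths true (2 * (k : ℤ) + 1) 4).ncard = 4 * 3 ^ k := by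
  have h : (brickPaths true (2 * (k : ℤ) + 1) 4).encard = 4 * 3 ^ k := by
    rw [encard_brickPaths, Finset.sum_congr rfl fun β hβ =>
      encard_brickPathsTo_width_four k (Finset.mem_Ico.1 hβ).1 (Finset.mem_Ico.1 hβ).2]
    simp
  simp [Set.ncard_def, h]

/-- For every integer `k ≥ 1`, the number of brick-wall lattice paths of the
first type in the rectangle `{0,…,2k} × {0,1,2,3}` (width 4, odd length
`l = 2k+1`) equals `4 · 3^k`. -/
theorem brickPaths_first_width_four_odd_length (k : ℕ) (hk : 1 ≤ k) :
    (brickPaths true (2 * (k : ℤ) + 1) 4).ncard = 4 * 3 ^ k :=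
  brickPaths_first_width_four_odd_length_general k
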